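/- Let X be a locally compact separable metric space, f : X → ℝ a continuous function, r ∈ ℕ, g : X → ℝ^r a continuous map, and c ∈ ℝ a real number that is not a local extremum of f restricted to the set fat_g X. Then for every open subset B ⊆ X and each a ∈ {0,1}, the set g(B ∩ U^∂(f,c)) \ g(B ∩ U^a(f,c)) is meagre in ℝ^r. -/

import Mathlib

open TopologicalSpace

/-- `c` is a local maximum (resp. minimum) of `f` restricted to `A` if there is an open set
`V` such that `c` is the maximum (resp. minimum) value of `f` on `V ∩ A`, attained there;
a local extremum is a local maximum or a local minimum. -/
def IsLocalExtremumOn {X : Type*} [TopologicalSpace X] (f : X → ℝ) (A : Set X) (c : ℝ) :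
    Prop :=
  (∃ V : Set X, IsOpen V ∧ c ∈ f '' (V ∩ A) ∧ ∀ y ∈ V ∩ A, f y ≤ c) ∨
  (∃ V : Set X, IsOpen V ∧ c ∈ f '' (V ∩ A) ∧ ∀ y ∈ V ∩ A, c ≤ f y)

/-- `U^0(f,c) = {x | f x < c}` and `U^1(f,c) = {x | f x > c}`. -/
def Uset {X : Type*} (f : X → ℝ) (c : ℝ) : Bool → Set X
  | false => {x | f x < c}
  | true => {x | c < f x}

/-- The set of fat points of `A ⊆ X` with respect to `g : X → ℝ^r`. -/
def fatPoints {X : Type*} [TopologicalSpace X] {r : ℕ}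
    (g : X → EuclideanSpace ℝ (Fin r)) (A : Set X) : Set X :=
  {x ∈ A | ∀ V ∈ nhds x, (interior (g '' (A ∩ V))).Nonempty}

/-!
Let `x ∈ B` with `f x = c` and `g x ∉ T := g(B ∩ U^a(f,c))`. The images of non-fat points
form a meagre set: each has a compact neighbourhood whose image is closed with empty interior,
and countably many of these cover. If `x` is fat, the hypothesis on `c` produces fat points of
the open set `B ∩ U^a(f,c)` arbitrarily close to `x`, so `g x` lies in the closure of
`interior T`, hence on the frontier of this open set, which is nowhere dense.
-/

open Set Filter Topology

lemma IsOpen.isNowhereDense_frontier {Y : Type*} [TopologicalSpace Y] {s : Set Y}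
    (hs : IsOpen s) : IsNowhereDense (frontier s) := by
  rw [isClosed_frontier.isNowhereDense_iff, ← frontier_compl]
  exact interior_frontier hs.isClosed_compl

section

variable {X : Type*} [TopologicalSpace X] {r : ℕ} {g : X → EuclideanSpace ℝ (Fin r)}

lemma mem_fatPoints_univ {x : X} :
    x ∈ fatPoints g univ ↔ ∀ V ∈ 𝓝 x, (interior (g '' V)).Nonempty := by
  simp [fatPoints]

lemma isOpen_Uset {f : X → ℝ} (hf : Continuous f) (c : ℝ) : ∀ a, IsOpen (Uset f c a)
  | false => isOpen_lt hf continuous_const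
  | true => isOpen_lt continuous_const hf

lemma exists_mem_nhds_isNowhereDense_image_of_notMem_fatPoints [LocallyCompactSpace X]
    (hg : Continuous g) {x : X} (hx : x ∉ fatPoints g univ) :
    ∃ K ∈ 𝓝 x, IsNowhereDense (g '' K) := by
  obtain ⟨V, hV, hVint⟩ := by simpa [mem_fatPoints_univ, not_nonempty_iff_eq_empty] using hx
  obtain ⟨K, hK, hKV, hKc⟩ := local_compact_nhds hV
  refine ⟨K, hK, ?_⟩
  rw [((hKc.image hg).isClosed).isNowhereDense_iff]
  exact subset_empty_iff.1 (hVint ▸ interior_mono (image_mono hKV))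

lemma isMeagre_image_compl_fatPoints [LocallyCompactSpace X] [SecondCountableTopology X]
    (hg : Continuous g) : IsMeagre (g '' (fatPoints g univ)ᶜ) := by
  choose! K hK hKnd using fun x (hx : x ∈ (fatPoints g univ)ᶜ) ↦
    exists_mem_nhds_isNowhereDense_image_of_notMem_fatPoints hg hx
  obtain ⟨t, ht, htc, hcover⟩ :=
    countable_cover_nhdsWithin fun x hx ↦ mem_nhdsWithin_of_mem_nhds (hK x hx)
  refine (isMeagre_biUnion htc fun x hx ↦ (hKnd x (ht hx)).isMeagre).mono ?_
  rw [image_subset_iff]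
  refine hcover.trans (iUnion₂_subset fun x hx ↦ ?_)
  rw [← image_subset_iff]
  exact subset_biUnion_of_mem (u := fun x ↦ g '' K x) hx

lemma image_mem_closure_interior_image_of_mem_fatPoints (hg : Continuous g) {W : Set X}
    (hW : IsOpen W) {y : X} (hy : y ∈ fatPoints g univ ∩ W) :
    g y ∈ closure (interior (g '' W)) := by
  refine mem_closure_iff.2 fun N hN hyN ↦ ?_
  obtain ⟨z, hz⟩ := mem_fatPoints_univ.1 hy.1 (W ∩ g ⁻¹' N)
    ((hW.inter (hN.preimage hg)).mem_nhds ⟨hy.2, hyN⟩)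
  have hzW : z ∈ interior (g '' W) := interior_mono (image_mono inter_subset_left) hz
  have hzN : z ∈ N := by
    obtain ⟨w, hw, rfl⟩ := interior_subset hz
    exact hw.2
  exact ⟨z, hzN, hzW⟩

lemma image_mem_closure_interior_image_of_mem_closure_fatPoints (hg : Continuous g)
    {W : Set X} (hW : IsOpen W) {x : X} (hx : x ∈ closure (fatPoints g univ ∩ W)) :
    g x ∈ closure (interior (g '' W)) := by
  have hmaps : MapsTo g (fatPoints g univ ∩ W) (closure (interior (g '' W))) :=
    fun y hy ↦ image_mem_closure_interior_image_of_mem_fatPoints hg hW hy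
  simpa using map_mem_closure hg hx hmaps

lemma exists_mem_inter_Uset_of_not_isLocalExtremumOn {f : X → ℝ} {A : Set X} {c : ℝ}
    (hc : ¬ IsLocalExtremumOn f A c) {V : Set X} (hV : IsOpen V) {x : X} (hx : x ∈ V ∩ A)
    (hfx : f x = c) (a : Bool) : ∃ y ∈ V ∩ A, y ∈ Uset f c a := by
  have hcV : c ∈ f '' (V ∩ A) := ⟨x, hx, hfx⟩
  simp only [IsLocalExtremumOn, not_or, not_exists, not_and, not_forall, not_le] at hc
  cases a with
  | false => simpa [Uset] using hc.2 V hV hcV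
  | true => simpa [Uset] using hc.1 V hV hcV

lemma mem_closure_inter_Uset_of_not_isLocalExtremumOn {f : X → ℝ} {A : Set X} {c : ℝ}
    (hc : ¬ IsLocalExtremumOn f A c) {B : Set X} (hB : IsOpen B) {x : X} (hx : x ∈ A ∩ B)
    (hfx : f x = c) (a : Bool) : x ∈ closure (A ∩ (B ∩ Uset f c a)) := by
  refine mem_closure_iff.2 fun O hO hxO ↦ ?_
  obtain ⟨y, ⟨⟨hyO, hyB⟩, hyA⟩, hyU⟩ :=
    exists_mem_inter_Uset_of_not_isLocalExtremumOn hc (hO.inter hB) ⟨⟨hxO, hx.2⟩, hx.1⟩ hfx a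
  exact ⟨y, hyO, hyA, hyB, hyU⟩

end

/-- If `c` is not a local extremum of `f` restricted to `fat_g X`, then for every open
`B ⊆ X` and each `a ∈ {0,1}`, the set `g(B ∩ U^∂(f,c)) \ g(B ∩ U^a(f,c))` is meagre
in `ℝ^r`. -/
theorem image_open_bd_diff_meagre (X : Type*) [MetricSpace X]
    [SeparableSpace X] [LocallyCompactSpace X]
    (f : X → ℝ) (hf : Continuous f) (r : ℕ)
    (g : X → EuclideanSpace ℝ (Fin r)) (hg : Continuous g) (c : ℝ)
    (hc : ¬ IsLocalExtremumOn f (fatPoints g Set.univ) c) :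
    ∀ B : Set X, IsOpen B → ∀ a : Bool,
      IsMeagre (g '' (B ∩ f ⁻¹' {c}) \ g '' (B ∩ Uset f c a)) := by
  intro B hB a
  have : SecondCountableTopology X := UniformSpace.secondCountable_of_separable X
  have hW : IsOpen (B ∩ Uset f c a) := hB.inter (isOpen_Uset hf c a)
  refine ((isMeagre_image_compl_fatPoints hg).union
    (isOpen_interior (s := g '' (B ∩ Uset f c a))).isNowhereDense_frontier.isMeagre).mono ?_
  rintro _ ⟨⟨x, ⟨hxB, hfx⟩, rfl⟩, hxW⟩
  by_cases hx : x ∈ fatPoints g univ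
  · have hcl := image_mem_closure_interior_image_of_mem_closure_fatPoints hg hW
      (mem_closure_inter_Uset_of_not_isLocalExtremumOn hc hB ⟨hx, hxB⟩ hfx a)
    rw [isOpen_interior.frontier_eq]
    exact Or.inr ⟨hcl, fun h ↦ hxW (interior_subset h)⟩
  · exact Or.inl (mem_image_of_mem g hx)
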